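/- arXiv:1407.7428 — 2 statements merged into one kernel-verified Lean document; each statement's English description precedes it below -/
import Mathlib

section
/- Let A = {a,b,c} and R = {ac → ca, bc → cb, cab → cbb}, and let N = {a,b}* ∪ {cⁱ bʲ aᵏ : i ≥ 1, j,k ≥ 0}. Then N is a set of unique normal forms for the monoid presented by ⟨A | R⟩: for every word w over A there exists exactly one word z ∈ N with w ↔*_R z. -/
/-- The three-letter alphabet `{a, b, c}`. -/
inductive ABC : Type
  | a : ABC
  | b : ABC
  | c : ABC

open ABC

/-- Single-step reduction of a string rewriting system `R`:
`u →_R v` iff `u = xℓy` and `v = xry` for some rule `(ℓ, r) ∈ R`. -/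
def Step {α : Type*} (R : Set (List α × List α)) (u v : List α) : Prop :=
  ∃ x y l r, (l, r) ∈ R ∧ u = x ++ l ++ y ∧ v = x ++ r ++ y

/-- The rules `ac → ca`, `bc → cb`, `cab → cbb` of Example 3.4. -/
def Rp : Set (List ABC × List ABC) :=
  {([a,c], [c,a]), ([b,c], [c,b]), ([c,a,b], [c,b,b])}

/-- The set of normal forms `N = {a,b}* ∪ {cⁱbʲaᵏ : i ≥ 1, j,k ≥ 0}`. -/
def NF : Set (List ABC) :=
  {w | c ∉ w} ∪
  {w | ∃ i j k : ℕ, 1 ≤ i ∧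
        w = List.replicate i c ++ List.replicate j b ++ List.replicate k a}

/-!
Existence: a `c` commutes with every letter to its left (`ac ↔ ca`, `bc ↔ cb`), and behind a `c`
a `b` absorbs the block of `a`s before it (`cab ↔ cbb`), so appending one letter to an element
of `N` lands back in `N` up to `↔*`.

Uniqueness (van der Waerden's trick): the letters act on the right on codes of elements of `N`,
the three rules hold as identities between these actions, and so the code reached from the
empty word is a Thue invariant that recovers every element of `N`.
-/

open List

local infix:50 " ↔* " => Relation.EqvGen (Step Rp)

theorem Relation.EqvGen.map {α β : Type*} {r : α → α → Prop} {s : β → β → Prop} (f : α → β)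
    (hf : ∀ a b, r a b → s (f a) (f b)) {a b : α} (h : EqvGen r a b) :
    EqvGen s (f a) (f b) := by
  induction h with
  | rel _ _ h => exact .rel _ _ (hf _ _ h)
  | refl => exact .refl _
  | symm _ _ _ ih => exact .symm _ _ ih
  | trans _ _ _ _ _ ih₁ ih₂ => exact .trans _ _ _ ih₁ ih₂

section Thue

variable {α : Type*} {R : Set (List α × List α)}

theorem Step.of_mem {l r : List α} (h : (l, r) ∈ R) : Step R l r :=
  ⟨[], [], l, r, h, by simp, by simp⟩

theorem Step.congr {u v : List α} (x y : List α) (h : Step R u v) :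
    Step R (x ++ u ++ y) (x ++ v ++ y) := by
  obtain ⟨p, q, l, r, hlr, rfl, rfl⟩ := h
  exact ⟨x ++ p, q ++ y, l, r, hlr, by simp, by simp⟩

theorem eqvGen_step_congr {u v : List α} (x y : List α) (h : Relation.EqvGen (Step R) u v) :
    Relation.EqvGen (Step R) (x ++ u ++ y) (x ++ v ++ y) :=
  h.map (fun w => x ++ w ++ y) fun _ _ => Step.congr x y

end Thue

theorem step_cons_c {x : ABC} (hx : x ≠ c) (t : List ABC) :
    Step Rp (x :: c :: t) (c :: x :: t) := by
  have h : Step Rp [x, c] [c, x] := Step.of_mem (by cases x <;> simp_all [Rp])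
  simpa using h.congr [] t

theorem append_c_eqv_c_cons {u : List ABC} (hu : c ∉ u) : u ++ [c] ↔* c :: u := by
  induction u with
  | nil => exact .refl _
  | cons x u ih =>
    obtain ⟨hx, hu⟩ : c ≠ x ∧ c ∉ u := by simpa using hu
    have h : x :: (u ++ [c]) ↔* x :: c :: u := by simpa using eqvGen_step_congr [x] [] (ih hu)
    exact .trans _ _ _ h (.rel _ _ (step_cons_c (Ne.symm hx) u))

theorem c_cons_append_ab_eqv {v : List ABC} (hv : c ∉ v) :
    c :: (v ++ [a, b]) ↔* c :: (v ++ [b, b]) := by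
  have hcab : Step Rp (v ++ [c, a, b]) (v ++ [c, b, b]) := by
    simpa using (Step.of_mem (R := Rp) (by simp [Rp])).congr v []
  have hswap (t : List ABC) : v ++ c :: t ↔* c :: (v ++ t) := by
    simpa using eqvGen_step_congr [] t (append_c_eqv_c_cons hv)
  exact .trans _ _ _ (.symm _ _ (hswap _)) (.trans _ _ _ (.rel _ _ hcab) (hswap _))

theorem c_cons_replicate_append_b_eqv (j k : ℕ) :
    c :: (replicate j b ++ replicate k a ++ [b]) ↔* c :: replicate (j + k + 1) b := by
  induction k with
  | zero => simpa [replicate_succ'] using .refl _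
  | succ k ih =>
    have h₁ : c :: (replicate j b ++ replicate (k + 1) a ++ [b]) ↔*
        c :: (replicate j b ++ replicate k a ++ [b] ++ [b]) := by
      simpa [replicate_succ'] using
        c_cons_append_ab_eqv (v := replicate j b ++ replicate k a) (by simp)
    have h₂ : c :: (replicate j b ++ replicate k a ++ [b] ++ [b]) ↔*
        c :: (replicate (j + k + 1) b ++ [b]) := by
      simpa using eqvGen_step_congr [] [b] ih
    rw [show j + (k + 1) + 1 = j + k + 1 + 1 by ring, replicate_succ' (n := j + k + 1)]
    exact .trans _ _ _ h₁ h₂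

theorem exists_c_cons_eqv {u : List ABC} (hu : c ∉ u) :
    ∃ j k, c :: u ↔* c :: (replicate j b ++ replicate k a) := by
  induction u using List.reverseRecOn with
  | nil => exact ⟨0, 0, .refl _⟩
  | append_singleton u x ih =>
    obtain ⟨j, k, h⟩ := ih (by simp_all)
    have h' : c :: (u ++ [x]) ↔* c :: (replicate j b ++ replicate k a ++ [x]) := by
      simpa using eqvGen_step_congr [] [x] h
    cases x with
    | a => exact ⟨j, k + 1, by simpa [replicate_succ'] using h'⟩
    | b => exact ⟨j + k + 1, 0, by simpa using .trans _ _ _ h' (c_cons_replicate_append_b_eqv j k)⟩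
    | c => simp at hu

theorem exists_mem_NF_append_singleton_eqv {z : List ABC} (hz : z ∈ NF) (x : ABC) :
    ∃ z' ∈ NF, z ++ [x] ↔* z' := by
  rcases hz with hz | ⟨i, j, k, hi, rfl⟩
  · cases x with
    | c =>
      obtain ⟨j, k, h⟩ := exists_c_cons_eqv hz
      exact ⟨_, Or.inr ⟨1, j, k, le_rfl, rfl⟩, .trans _ _ _ (append_c_eqv_c_cons hz) h⟩
    | _ => exact ⟨_, Or.inl (by simpa using hz), .refl _⟩
  · obtain ⟨i, rfl⟩ := Nat.exists_eq_add_of_le' hi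
    cases x with
    | a => exact ⟨_, Or.inr ⟨i + 1, j, k + 1, hi, by simp [replicate_succ']⟩, .refl _⟩
    | b =>
      refine ⟨_, Or.inr ⟨i + 1, j + k + 1, 0, hi, rfl⟩, ?_⟩
      simpa [replicate_succ'] using
        eqvGen_step_congr (replicate i c) [] (c_cons_replicate_append_b_eqv j k)
    | c =>
      refine ⟨_, Or.inr ⟨i + 2, j, k, by omega, rfl⟩, ?_⟩
      have h := append_c_eqv_c_cons (u := replicate j b ++ replicate k a) (by simp)
      simpa [replicate_succ'] using eqvGen_step_congr (replicate (i + 1) c) [] h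

theorem exists_mem_NF_eqv (w : List ABC) : ∃ z ∈ NF, w ↔* z := by
  induction w using List.reverseRecOn with
  | nil => exact ⟨[], Or.inl (by simp), .refl _⟩
  | append_singleton w x ih =>
    obtain ⟨z, hz, hwz⟩ := ih
    obtain ⟨z', hz', hzz'⟩ := exists_mem_NF_append_singleton_eqv hz x
    exact ⟨z', hz', .trans _ _ _ (by simpa using eqvGen_step_congr [] [x] hwz) hzz'⟩

def ofState : List ABC ⊕ ℕ × ℕ × ℕ → List ABC
  | .inl u => u
  | .inr (i, j, k) => replicate (i + 1) c ++ replicate j b ++ replicate k a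

-- `(j, k)` codes the tail `b^j a^k` of `c^(i+1) b^j a^k`; the value on `c` is never used.
def tailAct : ℕ × ℕ → ABC → ℕ × ℕ
  | (j, k), a => (j, k + 1)
  | (j, k), b => (j + k + 1, 0)
  | p, c => p

def stateAct : List ABC ⊕ ℕ × ℕ × ℕ → ABC → List ABC ⊕ ℕ × ℕ × ℕ
  | .inl u, c => .inr (0, u.foldl tailAct (0, 0))
  | .inl u, x => .inl (u ++ [x])
  | .inr (i, p), c => .inr (i + 1, p)
  | .inr (i, p), x => .inr (i, tailAct p x)

def toState (w : List ABC) : List ABC ⊕ ℕ × ℕ × ℕ := w.foldl stateAct (.inl [])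

theorem foldl_stateAct_eq_of_mem_Rp {l r : List ABC} (h : (l, r) ∈ Rp)
    (s : List ABC ⊕ ℕ × ℕ × ℕ) : l.foldl stateAct s = r.foldl stateAct s := by
  simp only [Rp, Set.mem_insert_iff, Set.mem_singleton_iff, Prod.mk.injEq] at h
  rcases h with ⟨rfl, rfl⟩ | ⟨rfl, rfl⟩ | ⟨rfl, rfl⟩ <;> rcases s with u | ⟨i, j, k⟩ <;>
    simp [stateAct, tailAct, foldl_append] <;> omega

theorem toState_eq_of_eqv {u v : List ABC} (h : u ↔* v) : toState u = toState v := by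
  refine eq_equivalence.eqvGen_iff.mp (h.map toState ?_)
  rintro _ _ ⟨x, y, l, r, hlr, rfl, rfl⟩
  simp only [toState, foldl_append, foldl_stateAct_eq_of_mem_Rp hlr]

theorem foldl_stateAct_inl {u : List ABC} (hu : c ∉ u) (v : List ABC) :
    u.foldl stateAct (.inl v) = .inl (v ++ u) := by
  induction u generalizing v with
  | nil => simp
  | cons x u ih => cases x <;> simp_all [stateAct]

theorem toState_replicate (i j k : ℕ) :
    toState (replicate (i + 1) c ++ replicate j b ++ replicate k a) = .inr (i, j, k) := by
  have hc (n i : ℕ) (p : ℕ × ℕ) :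
      (replicate n c).foldl stateAct (.inr (i, p)) = .inr (i + n, p) := by
    induction n generalizing i with
    | zero => rfl
    | succ n ih => simp [replicate_succ, stateAct, ih, add_assoc, add_comm 1]
  have hb (n i j : ℕ) :
      (replicate n b).foldl stateAct (.inr (i, j, 0)) = .inr (i, j + n, 0) := by
    induction n generalizing j with
    | zero => rfl
    | succ n ih => simp [replicate_succ, stateAct, tailAct, ih]; omega
  have ha (n i j k : ℕ) :
      (replicate n a).foldl stateAct (.inr (i, j, k)) = .inr (i, j, k + n) := by
    induction n generalizing k with
    | zero => rfl
    | succ n ih => simp [replicate_succ, stateAct, tailAct, ih]; omega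
  simp [toState, replicate_succ, foldl_append, stateAct, hc, hb, ha]

theorem leftInvOn_ofState_toState : Set.LeftInvOn ofState toState NF := by
  rintro z (hz | ⟨i, j, k, hi, rfl⟩)
  · simpa [toState, ofState] using congrArg ofState (foldl_stateAct_inl hz [])
  · obtain ⟨i, rfl⟩ := Nat.exists_eq_add_of_le' hi
    rw [toState_replicate, ofState]

/-- `N` is a set of unique normal forms for the monoid presented by `⟨A | R⟩`:
every word over `A` is `↔*_R`-equivalent to exactly one word of `N`. -/
theorem stmt_10 :
    ∀ w : List ABC, ∃! z : List ABC, z ∈ NF ∧ Relation.EqvGen (Step Rp) w z := by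
  intro w
  obtain ⟨z, hz, hwz⟩ := exists_mem_NF_eqv w
  refine ⟨z, ⟨hz, hwz⟩, fun z' ⟨hz', hwz'⟩ => leftInvOn_ofState_toState.injOn hz' hz ?_⟩
  exact (toState_eq_of_eqv hwz').symm.trans (toState_eq_of_eqv hwz)
end

section
/- Let A₁ and A₂ be disjoint finite alphabets, and let R₁ and R₂ be rewriting systems on A₁ and A₂ respectively, regarded (via the inclusions A₁*, A₂* ⊆ (A₁ ∪ A₂)*) as rewriting systems on the alphabet A₁ ∪ A₂. If (A₁, R₁) and (A₂, R₂) are both complete (terminating and confluent), then the union system (A₁ ∪ A₂, R₁ ∪ R₂) is complete. (This union presents the free product of the monoids presented by ⟨A₁ | R₁⟩ and ⟨A₂ | R₂⟩.) -/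
/-- `Over A w` means the word `w` is a word over the (sub)alphabet `A`. -/
def Over {α : Type*} (A : Set α) (w : List α) : Prop := ∀ x ∈ w, x ∈ A

/-!
Erasing the letters outside `A₁` turns an `R₁`-step into an `R₁`-step between words over `A₁`
and an `R₂`-step into an equality, and symmetrically for `A₂`. So the pair of projections maps
every step of the union to a move in the game sum of two terminating systems, which terminates.

Rules of a terminating system have nonempty left-hand sides, so an `R₁`-redex and an `R₂`-redex
never overlap and the two steps commute. An `R₁`-reduction of a word with letters outside `A₁`
splits at such a letter into independent reductions of the two sides, so `R₁` is confluent on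
all words. Hence the union is locally confluent, and Newman's lemma concludes.
-/

open Relation

theorem Relation.newman {β : Type*} {r : β → β → Prop} (hwf : WellFounded (flip r))
    (hloc : ∀ a b c, r a b → r a c → Join (ReflTransGen r) b c) {a b c : β}
    (hab : ReflTransGen r a b) (hac : ReflTransGen r a c) : Join (ReflTransGen r) b c := by
  induction a using hwf.induction generalizing b c with | _ a ih
  rcases hab.cases_head with rfl | ⟨b₁, hab₁, hb₁b⟩
  · exact ⟨c, hac, .refl⟩
  rcases hac.cases_head with rfl | ⟨c₁, hac₁, hc₁c⟩
  · exact ⟨b, .refl, hab⟩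
  obtain ⟨d, hb₁d, hc₁d⟩ := hloc a b₁ c₁ hab₁ hac₁
  obtain ⟨e, hbe, hde⟩ := ih b₁ hab₁ hb₁b hb₁d
  obtain ⟨f, hcf, hef⟩ := ih c₁ hac₁ hc₁c (hc₁d.trans hde)
  exact ⟨f, hbe.trans hef, hcf⟩

theorem wellFounded_of_not_exists_chain {β : Type*} {r : β → β → Prop} {P : β → Prop}
    (h : ¬ ∃ f : ℕ → β, (∀ n, P (f n)) ∧ ∀ n, r (f n) (f (n + 1))) :
    WellFounded fun b a => P a ∧ r a b :=
  wellFounded_iff_isEmpty_descending_chain.mpr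
    ⟨fun ⟨f, hf⟩ => h ⟨f, fun n => (hf n).1, fun n => (hf n).2⟩⟩

namespace List

variable {α : Type*}

theorem exists_eq_append_of_append_eq_append {a l₁ y₁ l₂ y₂ : List α}
    (h : l₁ ++ y₁ = a ++ (l₂ ++ y₂)) (h₂ : l₂ ≠ []) (hdis : ∀ c ∈ l₁, c ∉ l₂) :
    ∃ m, a = l₁ ++ m ∧ y₁ = m ++ l₂ ++ y₂ := by
  rcases append_eq_append_iff.mp h with ⟨m, rfl, rfl⟩ | ⟨c', rfl, hc'⟩
  · exact ⟨m, rfl, by simp⟩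
  rcases c' with _ | ⟨c, t⟩
  · exact ⟨[], by simp, by simp [hc']⟩
  obtain ⟨d, s, rfl⟩ := l₂.exists_cons_of_ne_nil h₂
  obtain ⟨rfl, -⟩ := cons_eq_cons.mp (by simpa using hc')
  exact absurd mem_cons_self (hdis d (by simp))

theorem factors_apart_of_disjoint {x₁ l₁ y₁ x₂ l₂ y₂ : List α}
    (h : x₁ ++ l₁ ++ y₁ = x₂ ++ l₂ ++ y₂) (h₁ : l₁ ≠ []) (h₂ : l₂ ≠ []) (hdis : ∀ a ∈ l₁, a ∉ l₂) :
    (∃ m, x₂ = x₁ ++ l₁ ++ m ∧ y₁ = m ++ l₂ ++ y₂) ∨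
      (∃ m, x₁ = x₂ ++ l₂ ++ m ∧ y₂ = m ++ l₁ ++ y₁) := by
  simp only [append_assoc] at h
  rcases append_eq_append_iff.mp h with ⟨a, rfl, h'⟩ | ⟨a, rfl, h'⟩
  · obtain ⟨m, rfl, rfl⟩ := exists_eq_append_of_append_eq_append h' h₂ hdis
    exact .inl ⟨m, by simp, rfl⟩
  · obtain ⟨m, rfl, rfl⟩ :=
      exists_eq_append_of_append_eq_append h' h₁ fun a ha ha' => hdis a ha' ha
    exact .inr ⟨m, by simp, rfl⟩

end List

namespace Step

variable {α : Type*} {A B A₁ A₂ : Set α} {R R₁ R₂ : Set (List α × List α)} {u v w : List α}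

theorem mono (hRS : R₁ ⊆ R₂) (h : Step R₁ u v) : Step R₂ u v := by
  obtain ⟨x, y, l, r, hm, rfl, rfl⟩ := h
  exact ⟨x, y, l, r, hRS hm, rfl, rfl⟩

theorem of_union (h : Step (R₁ ∪ R₂) u v) : Step R₁ u v ∨ Step R₂ u v := by
  obtain ⟨x, y, l, r, hm | hm, rfl, rfl⟩ := h
  exacts [.inl ⟨x, y, l, r, hm, rfl, rfl⟩, .inr ⟨x, y, l, r, hm, rfl, rfl⟩]

theorem append_left (p : List α) (h : Step R u v) : Step R (p ++ u) (p ++ v) := by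
  obtain ⟨x, y, l, r, hm, rfl, rfl⟩ := h
  exact ⟨p ++ x, y, l, r, hm, by simp, by simp⟩

theorem append_right (q : List α) (h : Step R u v) : Step R (u ++ q) (v ++ q) := by
  obtain ⟨x, y, l, r, hm, rfl, rfl⟩ := h
  exact ⟨x, y ++ q, l, r, hm, by simp, by simp⟩

theorem reflTransGen_append {p p' q q' : List α} (hp : ReflTransGen (Step R) p p')
    (hq : ReflTransGen (Step R) q q') : ReflTransGen (Step R) (p ++ q) (p' ++ q') :=
  (hp.lift (· ++ q) fun _ _ => append_right q).trans (hq.lift (p' ++ ·) fun _ _ => append_left p')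

theorem nonempty_lhs (hR : ∀ p ∈ R, Over A p.2)
    (hterm : ¬ ∃ f : ℕ → List α, (∀ n, Over A (f n)) ∧ ∀ n, Step R (f n) (f (n + 1))) :
    ∀ p ∈ R, p.1 ≠ [] := by
  rintro ⟨l, r⟩ hm (rfl : l = [])
  refine hterm ⟨fun n => (List.replicate n r).flatten, fun n x hx => ?_, fun n => ?_⟩
  · obtain ⟨t, ht, hxt⟩ := List.mem_flatten.mp hx
    rw [List.eq_of_mem_replicate ht] at hxt
    exact hR _ hm x hxt
  · exact ⟨[], _, [], r, hm, rfl, by simp [List.replicate_succ]⟩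

theorem filter_of_over [DecidablePred (· ∈ A)] (hR : ∀ p ∈ R, Over A p.1 ∧ Over A p.2)
    (h : Step R u v) : Step R (u.filter (· ∈ A)) (v.filter (· ∈ A)) := by
  obtain ⟨x, y, l, r, hm, rfl, rfl⟩ := h
  have hl : l.filter (· ∈ A) = l :=
    List.filter_eq_self.mpr fun a ha => by simpa using (hR _ hm).1 a ha
  have hr : r.filter (· ∈ A) = r :=
    List.filter_eq_self.mpr fun a ha => by simpa using (hR _ hm).2 a ha
  exact ⟨_, _, l, r, hm, by rw [List.filter_append, List.filter_append, hl],
    by rw [List.filter_append, List.filter_append, hr]⟩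

theorem filter_eq_of_disjoint [DecidablePred (· ∈ A)] (hdisj : Disjoint A B)
    (hR : ∀ p ∈ R, Over B p.1 ∧ Over B p.2) (h : Step R u v) :
    u.filter (· ∈ A) = v.filter (· ∈ A) := by
  obtain ⟨x, y, l, r, hm, rfl, rfl⟩ := h
  have hl : l.filter (· ∈ A) = [] := List.filter_eq_nil_iff.mpr fun a ha => by
    simpa using hdisj.notMem_of_mem_right ((hR _ hm).1 a ha)
  have hr : r.filter (· ∈ A) = [] := List.filter_eq_nil_iff.mpr fun a ha => by
    simpa using hdisj.notMem_of_mem_right ((hR _ hm).2 a ha)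
  simp only [List.filter_append, hl, hr]

theorem of_append_cons {p q : List α} {a : α} (hR : ∀ p ∈ R, p.1 ≠ [] ∧ Over A p.1)
    (ha : a ∉ A) (h : Step R (p ++ a :: q) v) :
    (∃ p', Step R p p' ∧ v = p' ++ a :: q) ∨ (∃ q', Step R q q' ∧ v = p ++ a :: q') := by
  obtain ⟨x, y, l, r, hm, hu, rfl⟩ := h
  have hdis : ∀ b ∈ l, b ∉ [a] := fun b hb hba =>
    ha (List.mem_singleton.mp hba ▸ (hR _ hm).2 b hb)
  have hu' : x ++ l ++ y = p ++ [a] ++ q := by simpa using hu.symm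
  rcases List.factors_apart_of_disjoint hu' (hR _ hm).1 (List.cons_ne_nil a []) hdis
    with ⟨m, rfl, rfl⟩ | ⟨m, rfl, rfl⟩
  · exact .inl ⟨x ++ r ++ m, ⟨x, m, l, r, hm, rfl, rfl⟩, by simp⟩
  · exact .inr ⟨m ++ r ++ y, ⟨m, y, l, r, hm, rfl, rfl⟩, by simp⟩

theorem reflTransGen_of_append_cons {p q : List α} {a : α}
    (hR : ∀ p ∈ R, p.1 ≠ [] ∧ Over A p.1) (ha : a ∉ A)
    (h : ReflTransGen (Step R) (p ++ a :: q) v) :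
    ∃ p' q', v = p' ++ a :: q' ∧ ReflTransGen (Step R) p p' ∧ ReflTransGen (Step R) q q' := by
  induction h with
  | refl => exact ⟨p, q, rfl, .refl, .refl⟩
  | tail _ hstep ih =>
    obtain ⟨p', q', rfl, hp, hq⟩ := ih
    rcases of_append_cons hR ha hstep with ⟨p'', hs, rfl⟩ | ⟨q'', hs, rfl⟩
    · exact ⟨p'', q', rfl, hp.tail hs, hq⟩
    · exact ⟨p', q'', rfl, hp, hq.tail hs⟩

theorem join_of_join_over (hR : ∀ p ∈ R, p.1 ≠ [] ∧ Over A p.1)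
    (hconf : ∀ u v w : List α, Over A u → ReflTransGen (Step R) u v →
      ReflTransGen (Step R) u w → Join (ReflTransGen (Step R)) v w)
    (hv : ReflTransGen (Step R) u v) (hw : ReflTransGen (Step R) u w) :
    Join (ReflTransGen (Step R)) v w := by
  induction hn : u.length using Nat.strong_induction_on generalizing u v w with | _ n ih
  by_cases hu : Over A u
  · exact hconf u v w hu hv hw
  obtain ⟨a, hau, ha⟩ : ∃ a ∈ u, a ∉ A := by simpa [Over] using hu
  obtain ⟨p, q, rfl⟩ := List.append_of_mem hau
  obtain ⟨pv, qv, rfl, hpv, hqv⟩ := reflTransGen_of_append_cons hR ha hv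
  obtain ⟨pw, qw, rfl, hpw, hqw⟩ := reflTransGen_of_append_cons hR ha hw
  obtain ⟨zp, hpvz, hpwz⟩ := ih p.length (by simp [← hn]) hpv hpw rfl
  obtain ⟨zq, hqvz, hqwz⟩ := ih q.length (by simp [← hn]; omega) hqv hqw rfl
  exact ⟨zp ++ a :: zq, reflTransGen_append hpvz (reflTransGen_append (p := [a]) .refl hqvz),
    reflTransGen_append hpwz (reflTransGen_append (p := [a]) .refl hqwz)⟩

theorem commute (hdisj : Disjoint A₁ A₂) (hR₁ : ∀ p ∈ R₁, p.1 ≠ [] ∧ Over A₁ p.1)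
    (hR₂ : ∀ p ∈ R₂, p.1 ≠ [] ∧ Over A₂ p.1) (hv : Step R₁ u v) (hw : Step R₂ u w) :
    ∃ z, Step R₂ v z ∧ Step R₁ w z := by
  obtain ⟨x₁, y₁, l₁, r₁, hm₁, rfl, rfl⟩ := hv
  obtain ⟨x₂, y₂, l₂, r₂, hm₂, hu, rfl⟩ := hw
  have hdis : ∀ a ∈ l₁, a ∉ l₂ := fun a ha ha' =>
    hdisj.notMem_of_mem_left ((hR₁ _ hm₁).2 a ha) ((hR₂ _ hm₂).2 a ha')
  rcases List.factors_apart_of_disjoint hu (hR₁ _ hm₁).1 (hR₂ _ hm₂).1 hdis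
    with ⟨m, rfl, rfl⟩ | ⟨m, rfl, rfl⟩
  · exact ⟨x₁ ++ r₁ ++ m ++ r₂ ++ y₂, ⟨x₁ ++ r₁ ++ m, y₂, l₂, r₂, hm₂, by simp, rfl⟩,
      ⟨x₁, m ++ r₂ ++ y₂, l₁, r₁, hm₁, by simp, by simp⟩⟩
  · exact ⟨x₂ ++ r₂ ++ m ++ r₁ ++ y₁, ⟨x₂, m ++ r₁ ++ y₁, l₂, r₂, hm₂, by simp, by simp⟩,
      ⟨x₂ ++ r₂ ++ m, y₁, l₁, r₁, hm₁, by simp, rfl⟩⟩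

theorem wellFounded_flip_union (hdisj : Disjoint A₁ A₂)
    (hR₁ : ∀ p ∈ R₁, Over A₁ p.1 ∧ Over A₁ p.2) (hR₂ : ∀ p ∈ R₂, Over A₂ p.1 ∧ Over A₂ p.2)
    (hwf₁ : WellFounded fun v u => Over A₁ u ∧ Step R₁ u v)
    (hwf₂ : WellFounded fun v u => Over A₂ u ∧ Step R₂ u v) :
    WellFounded (flip (Step (R₁ ∪ R₂))) := by
  classical
  have hover (A : Set α) (u : List α) : Over A (u.filter (· ∈ A)) := fun a ha => by
    simpa using (List.mem_filter.mp ha).2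
  refine Subrelation.wf (fun {v u} h => ?_)
    (InvImage.wf (fun u => (u.filter (· ∈ A₁), u.filter (· ∈ A₂))) (hwf₁.prod_gameAdd hwf₂))
  rcases of_union h with h | h
  · exact Prod.gameAdd_mk_iff.mpr <| .inl
      ⟨⟨hover A₁ u, h.filter_of_over hR₁⟩, (h.filter_eq_of_disjoint hdisj.symm hR₁).symm⟩
  · exact Prod.gameAdd_mk_iff.mpr <| .inr
      ⟨⟨hover A₂ u, h.filter_of_over hR₂⟩, (h.filter_eq_of_disjoint hdisj hR₂).symm⟩

theorem join_of_union (hdisj : Disjoint A₁ A₂)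
    (hR₁ : ∀ p ∈ R₁, p.1 ≠ [] ∧ Over A₁ p.1) (hR₂ : ∀ p ∈ R₂, p.1 ≠ [] ∧ Over A₂ p.1)
    (hconf₁ : ∀ u v w : List α, Over A₁ u → ReflTransGen (Step R₁) u v →
      ReflTransGen (Step R₁) u w → Join (ReflTransGen (Step R₁)) v w)
    (hconf₂ : ∀ u v w : List α, Over A₂ u → ReflTransGen (Step R₂) u v →
      ReflTransGen (Step R₂) u w → Join (ReflTransGen (Step R₂)) v w)
    {u v w : List α} (hv : Step (R₁ ∪ R₂) u v) (hw : Step (R₁ ∪ R₂) u w) :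
    Join (ReflTransGen (Step (R₁ ∪ R₂))) v w := by
  have lift₁ {a b : List α} : ReflTransGen (Step R₁) a b → ReflTransGen (Step (R₁ ∪ R₂)) a b :=
    fun h => h.lift id fun _ _ => mono Set.subset_union_left
  have lift₂ {a b : List α} : ReflTransGen (Step R₂) a b → ReflTransGen (Step (R₁ ∪ R₂)) a b :=
    fun h => h.lift id fun _ _ => mono Set.subset_union_right
  rcases of_union hv with hv | hv <;> rcases of_union hw with hw | hw
  · obtain ⟨z, hvz, hwz⟩ := join_of_join_over hR₁ hconf₁ (.single hv) (.single hw)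
    exact ⟨z, lift₁ hvz, lift₁ hwz⟩
  · obtain ⟨z, hvz, hwz⟩ := commute hdisj hR₁ hR₂ hv hw
    exact ⟨z, lift₂ (.single hvz), lift₁ (.single hwz)⟩
  · obtain ⟨z, hwz, hvz⟩ := commute hdisj hR₁ hR₂ hw hv
    exact ⟨z, lift₁ (.single hvz), lift₂ (.single hwz)⟩
  · obtain ⟨z, hvz, hwz⟩ := join_of_join_over hR₂ hconf₂ (.single hv) (.single hw)
    exact ⟨z, lift₂ hvz, lift₂ hwz⟩

end Step

theorem stmt_13_general {α : Type*} (A₁ A₂ : Set α) (hdisj : Disjoint A₁ A₂)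
    (R₁ R₂ : Set (List α × List α))
    (hR₁ : ∀ p ∈ R₁, Over A₁ p.1 ∧ Over A₁ p.2)
    (hR₂ : ∀ p ∈ R₂, Over A₂ p.1 ∧ Over A₂ p.2)
    (hterm₁ : ¬ ∃ f : ℕ → List α,
      (∀ n : ℕ, Over A₁ (f n)) ∧ ∀ n : ℕ, Step R₁ (f n) (f (n + 1)))
    (hconf₁ : ∀ u v w : List α, Over A₁ u →
      Relation.ReflTransGen (Step R₁) u v → Relation.ReflTransGen (Step R₁) u w →
      ∃ z : List α, Relation.ReflTransGen (Step R₁) v z ∧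
        Relation.ReflTransGen (Step R₁) w z)
    (hterm₂ : ¬ ∃ f : ℕ → List α,
      (∀ n : ℕ, Over A₂ (f n)) ∧ ∀ n : ℕ, Step R₂ (f n) (f (n + 1)))
    (hconf₂ : ∀ u v w : List α, Over A₂ u →
      Relation.ReflTransGen (Step R₂) u v → Relation.ReflTransGen (Step R₂) u w →
      ∃ z : List α, Relation.ReflTransGen (Step R₂) v z ∧
        Relation.ReflTransGen (Step R₂) w z) :
    (¬ ∃ f : ℕ → List α,
      (∀ n : ℕ, Over (A₁ ∪ A₂) (f n)) ∧ ∀ n : ℕ, Step (R₁ ∪ R₂) (f n) (f (n + 1))) ∧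
    (∀ u v w : List α, Over (A₁ ∪ A₂) u →
      Relation.ReflTransGen (Step (R₁ ∪ R₂)) u v →
      Relation.ReflTransGen (Step (R₁ ∪ R₂)) u w →
      ∃ z : List α, Relation.ReflTransGen (Step (R₁ ∪ R₂)) v z ∧
        Relation.ReflTransGen (Step (R₁ ∪ R₂)) w z) := by
  have hwf := Step.wellFounded_flip_union hdisj hR₁ hR₂
    (wellFounded_of_not_exists_chain hterm₁) (wellFounded_of_not_exists_chain hterm₂)
  have hlhs₁ : ∀ p ∈ R₁, p.1 ≠ [] ∧ Over A₁ p.1 := fun p hp =>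
    ⟨Step.nonempty_lhs (fun p hp => (hR₁ p hp).2) hterm₁ p hp, (hR₁ p hp).1⟩
  have hlhs₂ : ∀ p ∈ R₂, p.1 ≠ [] ∧ Over A₂ p.1 := fun p hp =>
    ⟨Step.nonempty_lhs (fun p hp => (hR₂ p hp).2) hterm₂ p hp, (hR₂ p hp).1⟩
  refine ⟨fun ⟨f, _, hf⟩ => (wellFounded_iff_isEmpty_descending_chain.mp hwf).false ⟨f, hf⟩,
    fun _ _ _ _ => Relation.newman hwf fun _ _ _ => ?_⟩
  exact Step.join_of_union hdisj hlhs₁ hlhs₂ hconf₁ hconf₂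

/-- If `(A₁, R₁)` and `(A₂, R₂)` are complete rewriting systems on disjoint
alphabets `A₁` and `A₂`, then the union system `(A₁ ∪ A₂, R₁ ∪ R₂)` is
complete (terminating and confluent). -/
theorem stmt_13 {α : Type*} [Fintype α] (A₁ A₂ : Set α) (hdisj : Disjoint A₁ A₂)
    (R₁ R₂ : Set (List α × List α))
    (hR₁ : ∀ p ∈ R₁, Over A₁ p.1 ∧ Over A₁ p.2)
    (hR₂ : ∀ p ∈ R₂, Over A₂ p.1 ∧ Over A₂ p.2)
    (hterm₁ : ¬ ∃ f : ℕ → List α,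
      (∀ n : ℕ, Over A₁ (f n)) ∧ ∀ n : ℕ, Step R₁ (f n) (f (n + 1)))
    (hconf₁ : ∀ u v w : List α, Over A₁ u →
      Relation.ReflTransGen (Step R₁) u v → Relation.ReflTransGen (Step R₁) u w →
      ∃ z : List α, Relation.ReflTransGen (Step R₁) v z ∧
        Relation.ReflTransGen (Step R₁) w z)
    (hterm₂ : ¬ ∃ f : ℕ → List α,
      (∀ n : ℕ, Over A₂ (f n)) ∧ ∀ n : ℕ, Step R₂ (f n) (f (n + 1)))
    (hconf₂ : ∀ u v w : List α, Over A₂ u →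
      Relation.ReflTransGen (Step R₂) u v → Relation.ReflTransGen (Step R₂) u w →
      ∃ z : List α, Relation.ReflTransGen (Step R₂) v z ∧
        Relation.ReflTransGen (Step R₂) w z) :
    (¬ ∃ f : ℕ → List α,
      (∀ n : ℕ, Over (A₁ ∪ A₂) (f n)) ∧ ∀ n : ℕ, Step (R₁ ∪ R₂) (f n) (f (n + 1))) ∧
    (∀ u v w : List α, Over (A₁ ∪ A₂) u →
      Relation.ReflTransGen (Step (R₁ ∪ R₂)) u v →
      Relation.ReflTransGen (Step (R₁ ∪ R₂)) u w →
      ∃ z : List α, Relation.ReflTransGen (Step (R₁ ∪ R₂)) v z ∧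
        Relation.ReflTransGen (Step (R₁ ∪ R₂)) w z) :=
  stmt_13_general A₁ A₂ hdisj R₁ R₂ hR₁ hR₂ hterm₁ hconf₁ hterm₂ hconf₂
end
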